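/- arXiv:2306.14985 — 3 statements merged into one kernel-verified Lean document; each statement's English description precedes it below -/
import Mathlib

section
/- Let S be a finite semigroup that is a left regular band of groups, with idempotent-power map ω. Then the relation s ≤ t defined by s·(ω t) = t is a partial order on S: it is reflexive (s ≤ s for all s), antisymmetric (s ≤ t and t ≤ s imply s = t), and transitive (s ≤ t and t ≤ u imply s ≤ u). -/
/-!
Since `ω t` is a right power of `t` and left multiplications commute with right multiplications,
`t * ω t = ω t * t = t`, and any `e` with `e * u = u` also fixes `ω u`. With LRBG1, `s * ω t = t`
gives `ω s * t = t`, hence `ω s * ω t = ω t`, which yields transitivity. Antisymmetry is LRBG2: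
`s = t * ω s = s * ω t * ω s = s * ω t = t`.
-/

section LeftRegularBandOfGroups

variable {S : Type*} [Semigroup S]

theorem mul_iterate_mul_right (x y u : S) (n : ℕ) :
    x * (fun t => t * y)^[n] u = (fun t => t * y)^[n] (x * u) := by
  induction n with
  | zero => rfl
  | succ n ih => rw [Function.iterate_succ_apply', Function.iterate_succ_apply', ← ih, mul_assoc]

variable {ω : S → S}

theorem mul_omega_self {s : S} (hpow : ∃ n : ℕ, ω s = (fun t => t * s)^[n] s)
    (lrbg1 : ω s * s = s) : s * ω s = s := by
  obtain ⟨n, hn⟩ := hpow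
  calc s * ω s = (fun t => t * s)^[n + 1] s := by
        rw [hn, mul_iterate_mul_right, Function.iterate_succ_apply]
    _ = ω s * s := by rw [Function.iterate_succ_apply', hn]
    _ = s := lrbg1

theorem omega_mul_of_mul_omega_eq (lrbg1 : ∀ s : S, ω s * s = s) {s t : S}
    (hst : s * ω t = t) : ω s * t = t := by
  rw [← hst, ← mul_assoc, lrbg1]

theorem mul_omega_of_mul_eq {e u : S} (hpow : ∃ n : ℕ, ω u = (fun t => t * u)^[n] u)
    (he : e * u = u) : e * ω u = ω u := by
  obtain ⟨n, hn⟩ := hpow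
  rw [hn, mul_iterate_mul_right, he]

theorem mul_omega_trans (hpow : ∀ s : S, ∃ n : ℕ, ω s = (fun t => t * s)^[n] s)
    (lrbg1 : ∀ s : S, ω s * s = s) {s t u : S} (hst : s * ω t = t) (htu : t * ω u = u) :
    s * ω u = u := by
  have hωtu : ω t * ω u = ω u :=
    mul_omega_of_mul_eq (hpow u) (omega_mul_of_mul_omega_eq lrbg1 htu)
  rw [← hωtu, ← mul_assoc, hst, htu]

theorem mul_omega_antisymm (lrbg2 : ∀ s t : S, s * t * ω s = s * t) {s t : S}
    (hst : s * ω t = t) (hts : t * ω s = s) : s = t :=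
  calc s = s * ω t * ω s := by rw [hst, hts]
    _ = t := by rw [lrbg2, hst]

end LeftRegularBandOfGroups

theorem lrbg_le_is_partial_order_general {S : Type*} [Semigroup S] (ω : S → S)
    (hpow : ∀ s : S, ∃ n : ℕ, ω s = (fun t => t * s)^[n] s)
    (lrbg1 : ∀ s : S, ω s * s = s)
    (lrbg2 : ∀ s t : S, s * t * ω s = s * t) :
    (∀ s : S, s * ω s = s) ∧
    (∀ s t : S, s * ω t = t → t * ω s = s → s = t) ∧
    (∀ s t u : S, s * ω t = t → t * ω u = u → s * ω u = u) :=
  ⟨fun s => mul_omega_self (hpow s) (lrbg1 s),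
    fun _ _ => mul_omega_antisymm lrbg2,
    fun _ _ _ => mul_omega_trans hpow lrbg1⟩

/-- In a finite LRBG, the relation `s ≤ t ↔ s·(ω t) = t` is a
partial order: reflexive, antisymmetric and transitive. -/
theorem lrbg_le_is_partial_order {S : Type*} [Semigroup S] [Fintype S] (ω : S → S)
    (hidem : ∀ s : S, ω s * ω s = ω s)
    (hpow : ∀ s : S, ∃ n : ℕ, ω s = (fun t => t * s)^[n] s)
    (lrbg1 : ∀ s : S, ω s * s = s)
    (lrbg2 : ∀ s t : S, s * t * ω s = s * t) :
    (∀ s : S, s * ω s = s) ∧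
    (∀ s t : S, s * ω t = t → t * ω s = s → s = t) ∧
    (∀ s t u : S, s * ω t = t → t * ω u = u → s * ω u = u) :=
  lrbg_le_is_partial_order_general ω hpow lrbg1 lrbg2
end

section
/- Let S be a finite semigroup that is a left regular band of groups, with idempotent-power map ω, and let x ∈ S be idempotent. For every t ∈ S with ω t ∼ x, there exists a unique s ∈ S with ω s = x and s ∼ t. (Equivalently, the support map restricted to the maximal subgroup G_x is a bijection of G_x onto the ∼-classes of elements u with ω u ∼ x, i.e. supp restricts to an isomorphism G_x ≅ G_{supp(x)}.) -/
/-- The support relation `s ∼ t` on a left regular band of groups: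
`(ω s)·t = s` and `(ω t)·s = t`. -/
def LRBGsim {S : Type*} [Mul S] (ω : S → S) (s t : S) : Prop :=
  ω s * t = s ∧ ω t * s = t

/-!
The candidate is `s = x·t`, and uniqueness is immediate: `ω s = x` and `(ω s)·t = s` force
`s = x·t`. The content is `ω (x·t) = x`. Since `x·u·x = x·u` (LRBG2 with `ω x = x`), powers of
`x·t` are `(x·t)ⁿ = x·tⁿ`. With `ω t = t^a` and `ω (x·t) = (x·t)^b`, idempotency gives
`ω (x·t) = (x·t)^(ab) = x·(t^a)^b = x·ω t = x`.
Powers are computed in the monoid `WithOne S`, since `S` is only a semigroup.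
-/

theorem mul_pow_eq_of_mul_mul_self {M : Type*} [Monoid M] {x : M}
    (hx : ∀ u, x * u * x = x * u) (t : M) {n : ℕ} (hn : n ≠ 0) :
    (x * t) ^ n = x * t ^ n := by
  obtain ⟨n, rfl⟩ := Nat.exists_eq_add_one_of_ne_zero hn
  clear hn
  induction n with
  | zero => simp
  | succ n ih => rw [pow_succ, ih, ← mul_assoc, hx, mul_assoc, ← pow_succ]

theorem mul_pow_eq_self_of_isIdempotentElem {M : Type*} [Monoid M] {x t : M}
    (hx : ∀ u, x * u * x = x * u) {k m : ℕ} (ht : IsIdempotentElem (t ^ (k + 1)))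
    (hxt : x * t ^ (k + 1) = x) (hxtm : IsIdempotentElem ((x * t) ^ (m + 1))) :
    (x * t) ^ (m + 1) = x :=
  calc (x * t) ^ (m + 1) = ((x * t) ^ (m + 1)) ^ (k + 1) := (hxtm.pow_succ_eq k).symm
    _ = x * t ^ ((k + 1) * (m + 1)) := by
      rw [← pow_mul', mul_pow_eq_of_mul_mul_self hx t (by positivity)]
    _ = x := by rw [pow_mul, ht.pow_succ_eq, hxt]

section LeftRegularBandOfGroups

variable {S : Type*} [Semigroup S] {ω : S → S}

theorem WithOne.coe_iterate_mul_right (s : S) (n : ℕ) :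
    (((fun t => t * s)^[n] s : S) : WithOne S) = (s : WithOne S) ^ (n + 1) := by
  induction n with
  | zero => simp
  | succ n ih => rw [Function.iterate_succ_apply', WithOne.coe_mul, ih, ← pow_succ]

theorem WithOne.isIdempotentElem_coe {e : S} (he : IsIdempotentElem e) :
    IsIdempotentElem (e : WithOne S) :=
  he.map WithOne.coeMulHom

theorem exists_coe_omega_eq_pow (hpow : ∀ s : S, ∃ n : ℕ, ω s = (fun t => t * s)^[n] s)
    (s : S) : ∃ n : ℕ, (ω s : WithOne S) = (s : WithOne S) ^ (n + 1) := by
  obtain ⟨n, hn⟩ := hpow s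
  exact ⟨n, by rw [hn, WithOne.coe_iterate_mul_right]⟩

theorem omega_eq_self_of_isIdempotentElem
    (hpow : ∀ s : S, ∃ n : ℕ, ω s = (fun t => t * s)^[n] s) {e : S} (he : IsIdempotentElem e) :
    ω e = e := by
  obtain ⟨n, hn⟩ := exists_coe_omega_eq_pow hpow e
  rw [← WithOne.coe_inj, hn, (WithOne.isIdempotentElem_coe he).pow_succ_eq]

theorem omega_mul_eq_of_mul_omega_eq (hidem : ∀ s : S, ω s * ω s = ω s)
    (hpow : ∀ s : S, ∃ n : ℕ, ω s = (fun t => t * s)^[n] s)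
    (lrbg2 : ∀ s t : S, s * t * ω s = s * t) {x t : S} (hx : x * x = x) (hxt : x * ω t = x) :
    ω (x * t) = x := by
  have hωx : ω x = x := omega_eq_self_of_isIdempotentElem hpow hx
  have hxux : ∀ u : WithOne S, (x : WithOne S) * u * x = x * u := by
    intro u
    cases u with
    | one => rw [mul_one, ← WithOne.coe_mul, hx]
    | coe u =>
      rw [← WithOne.coe_mul, ← WithOne.coe_mul, WithOne.coe_inj]
      simpa only [hωx] using lrbg2 x u
  obtain ⟨k, hk⟩ := exists_coe_omega_eq_pow hpow t
  obtain ⟨m, hm⟩ := exists_coe_omega_eq_pow hpow (x * t)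
  rw [WithOne.coe_mul] at hm
  rw [← WithOne.coe_inj, hm]
  refine mul_pow_eq_self_of_isIdempotentElem hxux (k := k) ?_ ?_ ?_
  · rw [← hk]
    exact WithOne.isIdempotentElem_coe (hidem t)
  · rw [← hk, ← WithOne.coe_mul, hxt]
  · rw [← hm]
    exact WithOne.isIdempotentElem_coe (hidem (x * t))

end LeftRegularBandOfGroups

theorem lrbg_supp_restricts_to_group_iso_general {S : Type*} [Semigroup S] (ω : S → S)
    (hidem : ∀ s : S, ω s * ω s = ω s)
    (hpow : ∀ s : S, ∃ n : ℕ, ω s = (fun t => t * s)^[n] s)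
    (lrbg1 : ∀ s : S, ω s * s = s)
    (lrbg2 : ∀ s t : S, s * t * ω s = s * t) :
    ∀ x : S, x * x = x → ∀ t : S, LRBGsim ω (ω t) x →
      ∃! s : S, ω s = x ∧ LRBGsim ω s t := by
  intro x hx t ⟨htx, hxt⟩
  rw [omega_eq_self_of_isIdempotentElem hpow (hidem t)] at htx
  rw [omega_eq_self_of_isIdempotentElem hpow hx] at hxt
  have hω : ω (x * t) = x := omega_mul_eq_of_mul_omega_eq hidem hpow lrbg2 hx hxt
  refine ⟨x * t, ⟨hω, by rw [hω], by rw [← mul_assoc, htx, lrbg1]⟩, ?_⟩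
  rintro s ⟨rfl, hs, -⟩
  exact hs.symm

/-- In a finite LRBG, for each idempotent `x` and each `t` with
`ω t ∼ x`, there is a unique `s` with `ω s = x` and `s ∼ t`; i.e. the support map
restricts to an isomorphism `G_x ≅ G_{supp(x)}`. -/
theorem lrbg_supp_restricts_to_group_iso {S : Type*} [Semigroup S] [Fintype S] (ω : S → S)
    (hidem : ∀ s : S, ω s * ω s = ω s)
    (hpow : ∀ s : S, ∃ n : ℕ, ω s = (fun t => t * s)^[n] s)
    (lrbg1 : ∀ s : S, ω s * s = s)
    (lrbg2 : ∀ s t : S, s * t * ω s = s * t) :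
    ∀ x : S, x * x = x → ∀ t : S, LRBGsim ω (ω t) x →
      ∃! s : S, ω s = x ∧ LRBGsim ω s t :=
  lrbg_supp_restricts_to_group_iso_general ω hidem hpow lrbg1 lrbg2
end

section
/- Let S be a finite semigroup that is a strict left regular band of groups, with idempotent-power map ω (so ω(s·t) = (ω s)·(ω t) for all s,t). Then for s, t ∈ S: s ≤ t if and only if there exists an idempotent y ∈ S with (ω s)·y = y and t = y·s; moreover, in that case also t = s·y. -/
/-! The key fact is that in a strict LRBG every idempotent `y` with `(ω s)·y = y` commutes with `s`:
strictness gives `ω (s·y) = y`, so `s·y = y·(s·y) = (y·s)·y = y·s` by (LRBG1) and (LRBG2).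
If `s ≤ t` then `y = ω t` is such an idempotent, and `t = s·(ω t) = (ω t)·s`; conversely
`s·ω (y·s) = s·y·(ω s) = s·y = y·s`. -/

namespace LRBG

variable {S : Type*} [Semigroup S] {ω : S → S}

theorem omega_eq_self_of_mul_self
    (hpow : ∀ s : S, ∃ n : ℕ, ω s = (fun t => t * s)^[n] s) {e : S} (he : e * e = e) :
    ω e = e := by
  obtain ⟨n, hn⟩ := hpow e
  exact hn.trans (Function.iterate_fixed (f := fun t => t * e) he n)

theorem mul_comm_of_omega_mul
    (hpow : ∀ s : S, ∃ n : ℕ, ω s = (fun t => t * s)^[n] s)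
    (lrbg1 : ∀ s : S, ω s * s = s)
    (lrbg2 : ∀ s t : S, s * t * ω s = s * t)
    (hstrict : ∀ s t : S, ω (s * t) = ω s * ω t)
    {s y : S} (hy : y * y = y) (hsy : ω s * y = y) :
    s * y = y * s := by
  have hωy : ω y = y := omega_eq_self_of_mul_self hpow hy
  have hω_sy : ω (s * y) = y := by rw [hstrict, hωy, hsy]
  calc s * y = y * (s * y) := by simpa only [hω_sy] using (lrbg1 (s * y)).symm
    _ = y * s * ω y := by rw [← mul_assoc, hωy]
    _ = y * s := lrbg2 y s

theorem omega_mul_omega_of_mul_omega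
    (hidem : ∀ s : S, ω s * ω s = ω s)
    (hpow : ∀ s : S, ∃ n : ℕ, ω s = (fun t => t * s)^[n] s)
    (hstrict : ∀ s t : S, ω (s * t) = ω s * ω t)
    {s t : S} (h : s * ω t = t) :
    ω s * ω t = ω t := by
  conv_rhs => rw [← h, hstrict, omega_eq_self_of_mul_self hpow (hidem t)]

end LRBG

open LRBG in
theorem strict_lrbg_le_characterization_general {S : Type*} [Semigroup S]
    (ω : S → S)
    (hidem : ∀ s : S, ω s * ω s = ω s)
    (hpow : ∀ s : S, ∃ n : ℕ, ω s = (fun t => t * s)^[n] s)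
    (lrbg1 : ∀ s : S, ω s * s = s)
    (lrbg2 : ∀ s t : S, s * t * ω s = s * t)
    (hstrict : ∀ s t : S, ω (s * t) = ω s * ω t) :
    ∀ s t : S,
      (s * ω t = t ↔ ∃ y : S, y * y = y ∧ ω s * y = y ∧ t = y * s) ∧
      (∀ y : S, y * y = y → ω s * y = y → t = y * s → t = s * y) := by
  have hcomm {s y : S} (hy : y * y = y) (hsy : ω s * y = y) : s * y = y * s :=
    mul_comm_of_omega_mul hpow lrbg1 lrbg2 hstrict hy hsy
  intro s t
  refine ⟨⟨fun h => ?_, ?_⟩, fun y hy hsy ht => ht.trans (hcomm hy hsy).symm⟩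
  · have hst := omega_mul_omega_of_mul_omega hidem hpow hstrict h
    exact ⟨ω t, hidem t, hst, by rw [← hcomm (hidem t) hst, h]⟩
  · rintro ⟨y, hy, hsy, rfl⟩
    rw [hstrict, omega_eq_self_of_mul_self hpow hy, ← mul_assoc, lrbg2, hcomm hy hsy]

/-- In a finite *strict* LRBG, `s ≤ t` iff `t = y·s` for some
idempotent `y` with `(ω s)·y = y`; moreover in that case also `t = s·y`. -/
theorem strict_lrbg_le_characterization {S : Type*} [Semigroup S] [Fintype S]
    (ω : S → S)
    (hidem : ∀ s : S, ω s * ω s = ω s)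
    (hpow : ∀ s : S, ∃ n : ℕ, ω s = (fun t => t * s)^[n] s)
    (lrbg1 : ∀ s : S, ω s * s = s)
    (lrbg2 : ∀ s t : S, s * t * ω s = s * t)
    (hstrict : ∀ s t : S, ω (s * t) = ω s * ω t) :
    ∀ s t : S,
      (s * ω t = t ↔ ∃ y : S, y * y = y ∧ ω s * y = y ∧ t = y * s) ∧
      (∀ y : S, y * y = y → ω s * y = y → t = y * s → t = s * y) :=
  strict_lrbg_le_characterization_general ω hidem hpow lrbg1 lrbg2 hstrict
end
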